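/- Let H be the digraph with vertex set {1,2,3,4,5,6} and arc set {12, 34, 43, 56, 65, 23, 25, 14, 16, 54, 36} (a copy of N2). Given a digraph D with M = |V(D)|, let D' be the digraph obtained from D by replacing every arc uv of D with the gadget consisting of three new vertices x_{uv}, y_{uv}, z_{uv} (distinct for different arcs) and the four arcs u→x_{uv}, v→z_{uv}, x_{uv}→y_{uv}, z_{uv}→y_{uv} (so D' has no arcs between vertices of D). Define costs on D': for every t ∈ V(D), c_1(t) = 1, c_5(t) = 0, and c_i(t) = 2M+1 for i ∉ {1,5}; c_4(x_{uv}) = 2M+1 and c_6(z_{uv}) = 2M+1 for every arc uv of D; all remaining costs are 0. Then a homomorphism of D' to H exists, and the minimum cost of a homomorphism of D' to H equals |V(D)| − α(D). -/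

import Mathlib

namespace MinHomN2

/-- the target digraph: vertices 1,…,6 (as 0,…,5 : Fin 6) and arcs
{12, 34, 43, 56, 65, 23, 25, 14, 16, 54, 36}; a copy of N2. -/
def HArc : Fin 6 → Fin 6 → Prop := fun a b =>
  (a, b) ∈ ([(0,1),(2,3),(3,2),(4,5),(5,4),(1,2),(1,4),(0,3),(0,5),(4,3),(2,5)] :
    List (Fin 6 × Fin 6))

/-- vertex set of D': the vertices of D together with three gadget vertices
x_{uv} = (e,0), y_{uv} = (e,1), z_{uv} = (e,2) for every arc e = uv of D. -/
abbrev GV (α : Type*) (Ad : α → α → Prop) : Type _ :=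
  α ⊕ ({p : α × α // Ad p.1 p.2} × Fin 3)

/-- arcs of D': for each arc e = uv of D the gadget arcs
u→x_e, v→z_e, x_e→y_e, z_e→y_e. -/
def GArc {α : Type*} (Ad : α → α → Prop) : GV α Ad → GV α Ad → Prop
  | Sum.inl u, Sum.inr (e, i) => (u = e.1.1 ∧ i = 0) ∨ (u = e.1.2 ∧ i = 2)
  | Sum.inr (e, i), Sum.inr (e', i') => e = e' ∧ ((i = 0 ∧ i' = 1) ∨ (i = 2 ∧ i' = 1))
  | _, _ => False

/-- costs (with M = |V(D)|): for t ∈ V(D), c_1(t) = 1, c_5(t) = 0, c_i(t) = 2M+1 for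
i ∉ {1,5}; c_4(x_e) = 2M+1 and c_6(z_e) = 2M+1 for every arc e; all remaining costs
are 0. (Vertices 1, 5, 4, 6 are indices 0, 4, 3, 5 : Fin 6.) -/
def cost {α : Type*} (Ad : α → α → Prop) (M : ℕ) : Fin 6 → GV α Ad → ℕ
  | h, Sum.inl _ => if h = 0 then 1 else if h = 4 then 0 else 2 * M + 1
  | h, Sum.inr (_, i) => if (i = 0 ∧ h = 3) ∨ (i = 2 ∧ h = 5) then 2 * M + 1 else 0

/-!
An independent set `S` of `D` gives a homomorphism of cost `M - |S|`: send `S` to vertex 5 of `H`,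
the rest of `D` to vertex 1, and colour each gadget according to which ends of its arc lie in `S`
(never both). Conversely, under any homomorphism every vertex of `D` not sent to 5 costs at least 1,
and if both ends of an arc `uv` are sent to 5, the gadget forces `x_uv ↦ 4` or `z_uv ↦ 6`, which
costs `2M + 1 > M`. Either way the cost is at least `M - α(D)`.
-/

instance : DecidableRel HArc := fun a b => by unfold HArc; infer_instance

section

variable {α : Type*} (Ad : α → α → Prop)

def IsIndep (S : Finset α) : Prop := ∀ a ∈ S, ∀ b ∈ S, a ≠ b → ¬ Ad a b

def IsHom (f : GV α Ad → Fin 6) : Prop := ∀ x y, GArc Ad x y → HArc (f x) (f y)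

def totalCost [Fintype α] [DecidableRel Ad] (f : GV α Ad → Fin 6) : ℕ :=
  ∑ w, cost Ad (Fintype.card α) (f w) w

def baseFiber [Fintype α] (f : GV α Ad → Fin 6) (h : Fin 6) : Finset α :=
  Finset.univ.filter fun t => f (.inl t) = h

theorem exists_isGreatest_card_isIndep [Fintype α] :
    ∃ m, IsGreatest {n : ℕ | ∃ S : Finset α, IsIndep Ad S ∧ S.card = n} m :=
  BddAbove.exists_isGreatest_of_nonempty
    ⟨Fintype.card α, by rintro n ⟨S, -, rfl⟩; exact S.card_le_univ⟩
    ⟨0, ∅, by simp [IsIndep], rfl⟩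

end

def baseColour (a : Bool) : Fin 6 := if a then 4 else 0

def gadgetColour (a b : Bool) : Fin 3 → Fin 6
  | 0 => if a then 5 else 1
  | 1 => if a then 4 else 2
  | 2 => if b then 3 else 1

theorem gadgetColour_isHom (a b : Bool) (hab : (a && b) = false) :
    HArc (baseColour a) (gadgetColour a b 0) ∧ HArc (baseColour b) (gadgetColour a b 2) ∧
      HArc (gadgetColour a b 0) (gadgetColour a b 1) ∧
      HArc (gadgetColour a b 2) (gadgetColour a b 1) := by
  revert a b; decide

theorem gadgetColour_cheap (a b : Bool) (i : Fin 3) :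
    ¬ ((i = 0 ∧ gadgetColour a b i = 3) ∨ (i = 2 ∧ gadgetColour a b i = 5)) := by
  revert a b i; decide

section

variable {α : Type*} [DecidableEq α] (Ad : α → α → Prop) (S : Finset α)

def indepColouring : GV α Ad → Fin 6
  | .inl t => baseColour (decide (t ∈ S))
  | .inr (e, i) => gadgetColour (decide (e.1.1 ∈ S)) (decide (e.1.2 ∈ S)) i

theorem isHom_indepColouring (hirr : ∀ a, ¬ Ad a a) (hS : IsIndep Ad S) :
    IsHom Ad (indepColouring Ad S) := by
  have hnot : ∀ e : {p : α × α // Ad p.1 p.2},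
      (decide (e.1.1 ∈ S) && decide (e.1.2 ∈ S)) = false := by
    intro e
    by_contra h
    simp only [Bool.not_eq_false, Bool.and_eq_true, decide_eq_true_eq] at h
    exact hS _ h.1 _ h.2 (fun heq => hirr _ (heq ▸ e.2)) e.2
  rintro (u | ⟨e, i⟩) (v | ⟨e', i'⟩) h
  · exact h.elim
  · obtain ⟨hx, hz, -, -⟩ := gadgetColour_isHom _ _ (hnot e')
    rcases h with ⟨rfl, rfl⟩ | ⟨rfl, rfl⟩
    exacts [hx, hz]
  · exact h.elim
  · obtain ⟨-, -, hxy, hzy⟩ := gadgetColour_isHom _ _ (hnot e)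
    obtain ⟨rfl, ⟨rfl, rfl⟩ | ⟨rfl, rfl⟩⟩ := h
    exacts [hxy, hzy]

theorem totalCost_indepColouring [Fintype α] [DecidableRel Ad] :
    totalCost Ad (indepColouring Ad S) = Fintype.card α - S.card := by
  have hvertex : ∀ t : α, cost Ad (Fintype.card α) (indepColouring Ad S (.inl t)) (.inl t)
      = if t ∈ Sᶜ then 1 else 0 := by
    intro t
    by_cases ht : t ∈ S <;> simp [indepColouring, baseColour, cost, ht]
  have hgadget : ∀ p, cost Ad (Fintype.card α) (indepColouring Ad S (.inr p)) (.inr p) = 0 := by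
    rintro ⟨e, i⟩
    simp only [indepColouring, cost, gadgetColour_cheap, if_false]
  simp only [totalCost, Fintype.sum_sum_type, hvertex, hgadget, Finset.sum_const_zero,
    add_zero, Finset.sum_boole, Finset.filter_mem_eq_inter, Finset.univ_inter,
    Finset.card_compl, Nat.cast_id]

end

theorem HArc_gadget_of_ends_eq_four (x y z : Fin 6) (hx : HArc 4 x) (hz : HArc 4 z)
    (hxy : HArc x y) (hzy : HArc z y) : x = 3 ∨ z = 5 := by
  revert x y z; decide

section

variable {α : Type*} [Fintype α] (Ad : α → α → Prop)

theorem cost_le_totalCost [DecidableRel Ad] (f : GV α Ad → Fin 6) (w : GV α Ad) :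
    cost Ad (Fintype.card α) (f w) w ≤ totalCost Ad f :=
  Finset.single_le_sum (f := fun v => cost Ad (Fintype.card α) (f v) v)
    (fun _ _ => Nat.zero_le _) (Finset.mem_univ w)

theorem card_sub_card_baseFiber_le_totalCost [DecidableRel Ad] (f : GV α Ad → Fin 6) :
    Fintype.card α - (baseFiber Ad f 4).card ≤ totalCost Ad f := by
  classical
  have hvertex : ∀ t : α, (if t ∈ (baseFiber Ad f 4)ᶜ then 1 else 0)
      ≤ cost Ad (Fintype.card α) (f (.inl t)) (.inl t) := by
    intro t
    by_cases h0 : f (.inl t) = 0 <;> by_cases h4 : f (.inl t) = 4 <;>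
      simp [baseFiber, cost, h0, h4]
  calc Fintype.card α - (baseFiber Ad f 4).card
      = ∑ t : α, if t ∈ (baseFiber Ad f 4)ᶜ then 1 else 0 := by
        simp only [Finset.sum_boole, Finset.filter_mem_eq_inter, Finset.univ_inter,
          Finset.card_compl, Nat.cast_id]
    _ ≤ ∑ t : α, cost Ad (Fintype.card α) (f (.inl t)) (.inl t) :=
        Finset.sum_le_sum fun t _ => hvertex t
    _ ≤ totalCost Ad f := by
        simp only [totalCost, Fintype.sum_sum_type, le_add_iff_nonneg_right, zero_le]

theorem exists_cost_eq_of_adj_of_four {f : GV α Ad → Fin 6} (hf : IsHom Ad f) {u v : α}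
    (huv : Ad u v) (hu : f (.inl u) = 4) (hv : f (.inl v) = 4) :
    ∃ w, cost Ad (Fintype.card α) (f w) w = 2 * Fintype.card α + 1 := by
  set e : {p : α × α // Ad p.1 p.2} := ⟨(u, v), huv⟩
  have hx := hf (.inl u) (.inr (e, 0)) (Or.inl ⟨rfl, rfl⟩)
  have hz := hf (.inl v) (.inr (e, 2)) (Or.inr ⟨rfl, rfl⟩)
  have hxy := hf (.inr (e, 0)) (.inr (e, 1)) ⟨rfl, Or.inl ⟨rfl, rfl⟩⟩
  have hzy := hf (.inr (e, 2)) (.inr (e, 1)) ⟨rfl, Or.inr ⟨rfl, rfl⟩⟩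
  rw [hu] at hx
  rw [hv] at hz
  rcases HArc_gadget_of_ends_eq_four _ _ _ hx hz hxy hzy with h3 | h5
  · exact ⟨.inr (e, 0), by simp [cost, h3]⟩
  · exact ⟨.inr (e, 2), by simp [cost, h5]⟩

theorem exists_isIndep_card_sub_card_le_totalCost [DecidableRel Ad] {f : GV α Ad → Fin 6}
    (hf : IsHom Ad f) :
    ∃ T : Finset α, IsIndep Ad T ∧ Fintype.card α - T.card ≤ totalCost Ad f := by
  by_cases hT : IsIndep Ad (baseFiber Ad f 4)
  · exact ⟨_, hT, card_sub_card_baseFiber_le_totalCost Ad f⟩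
  · simp only [IsIndep, baseFiber, Finset.mem_filter, Finset.mem_univ, true_and, not_forall,
      not_not] at hT
    obtain ⟨u, hu, v, hv, -, huv⟩ := hT
    obtain ⟨w, hw⟩ := exists_cost_eq_of_adj_of_four Ad hf huv hu hv
    refine ⟨∅, by simp [IsIndep], ?_⟩
    have := cost_le_totalCost Ad f w
    omega

end

theorem stmt17_general {α : Type*} [Fintype α]
    (Ad : α → α → Prop) [DecidableRel Ad] (hirr : Irreflexive Ad) :
    ∃ m : ℕ,
      IsGreatest {n : ℕ | ∃ S : Finset α,
        (∀ a ∈ S, ∀ b ∈ S, a ≠ b → ¬ Ad a b) ∧ S.card = n} m ∧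
      (∃ f : GV α Ad → Fin 6, ∀ x y, GArc Ad x y → HArc (f x) (f y)) ∧
      IsLeast {n : ℕ | ∃ f : GV α Ad → Fin 6,
          (∀ x y, GArc Ad x y → HArc (f x) (f y)) ∧
          (∑ w, cost Ad (Fintype.card α) (f w) w) = n}
        (Fintype.card α - m) := by
  classical
  obtain ⟨m, ⟨S, hS, rfl⟩, hmax⟩ := exists_isGreatest_card_isIndep Ad
  have hhom := isHom_indepColouring Ad S hirr hS
  refine ⟨S.card, ⟨⟨S, hS, rfl⟩, hmax⟩, ⟨_, hhom⟩,
    ⟨_, hhom, totalCost_indepColouring Ad S⟩, ?_⟩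
  rintro _ ⟨f, hf, rfl⟩
  obtain ⟨T, hT, hcost⟩ := exists_isIndep_card_sub_card_le_totalCost Ad hf
  have : T.card ≤ S.card := hmax ⟨T, hT, rfl⟩
  exact le_trans (by omega) hcost

/-- Lemma 4.5: a homomorphism of D' to H exists, and the minimum cost of a homomorphism
of D' to H equals |V(D)| − α(D). -/
theorem stmt17 {α : Type*} [Fintype α] [DecidableEq α]
    (Ad : α → α → Prop) [DecidableRel Ad] (hirr : Irreflexive Ad) :
    ∃ m : ℕ,
      IsGreatest {n : ℕ | ∃ S : Finset α,
        (∀ a ∈ S, ∀ b ∈ S, a ≠ b → ¬ Ad a b) ∧ S.card = n} m ∧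
      (∃ f : GV α Ad → Fin 6, ∀ x y, GArc Ad x y → HArc (f x) (f y)) ∧
      IsLeast {n : ℕ | ∃ f : GV α Ad → Fin 6,
          (∀ x y, GArc Ad x y → HArc (f x) (f y)) ∧
          (∑ w, cost Ad (Fintype.card α) (f w) w) = n}
        (Fintype.card α - m) :=
  stmt17_general Ad hirr

end MinHomN2
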